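/- arXiv:0806.4196 — 3 statements merged into one kernel-verified Lean document; each statement's English description precedes it below -/
import Mathlib

section
/- Let C be a ring, let R and B be C-algebras, and let D be an ideal of R. For each n, let π_n : R ⊗_C B → (R/D^n) ⊗_C B be the map induced by the quotient R → R/D^n tensored with the identity on B. Then ker(π_n) = (ker π_1)^n. -/
open TensorProduct

theorem Algebra.TensorProduct.ker_map_quotient_mkₐ_id {C R B : Type*} [CommRing C] [CommRing R]
    [CommRing B] [Algebra C R] [Algebra C B] (I : Ideal R) :
    RingHom.ker (Algebra.TensorProduct.map (Ideal.Quotient.mkₐ C I) (AlgHom.id C B)) =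
      I.map (Algebra.TensorProduct.includeLeft : R →ₐ[C] R ⊗[C] B) := by
  rw [Algebra.TensorProduct.rTensor_ker _ (Ideal.Quotient.mkₐ_surjective C I)]
  exact congrArg _ (Ideal.Quotient.mkₐ_ker C I)

/-- with `π n : R ⊗[C] B →ₐ[C] (R ⧸ D ^ n) ⊗[C] B` the base change to `B`
of the quotient map `R → R ⧸ D ^ n`, we have `ker (π n) = (ker (π 1)) ^ n`. -/
theorem stmt_0 (C R B : Type*) [CommRing C] [CommRing R] [CommRing B]
    [Algebra C R] [Algebra C B] (D : Ideal R) (n : ℕ) :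
    RingHom.ker
        (Algebra.TensorProduct.map (Ideal.Quotient.mkₐ C (D ^ n)) (AlgHom.id C B)) =
      (RingHom.ker
        (Algebra.TensorProduct.map (Ideal.Quotient.mkₐ C (D ^ 1)) (AlgHom.id C B))) ^ n := by
  rw [Algebra.TensorProduct.ker_map_quotient_mkₐ_id,
    Algebra.TensorProduct.ker_map_quotient_mkₐ_id, pow_one, Ideal.map_pow]
end

section
/- Let O be a noetherian local ring with maximal ideal m and residue field k = O/m, and let I ⊆ O be an ideal. Suppose f ∈ O is such that every k-linear functional ψ : m/m^{n+1} → k vanishing on the image of I in O/m^{n+1} also vanishes on the image of f, for every n ≥ 0. If additionally f ∈ m, then f ∈ ⋂_n (m^{n+1} + I); hence if I is primary, f ∈ I. -/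
/-!
A functional on `m/m^{n+1}` killing the image of `I` but not that of `f` exists as soon as
`f ∉ m^{n+1} + I` (duality for subspaces of a vector space), so `f` lies in the `m`-adic
closure `⋂ₙ (m^{n+1} + I)` of `I`. By Krull's intersection theorem, applied to the finite
module `O ⧸ I`, every ideal of a noetherian local ring is `m`-adically closed.
-/

theorem Subspace.mem_of_forall_dual_eq_zero_of_eq_zero_on_inf {k V : Type*} [Field k]
    [AddCommGroup V] [Module k V] {M W : Submodule k V} {v : V} (hv : v ∈ M)
    (h : ∀ ψ : M →ₗ[k] k, (∀ x (hx : x ∈ M), x ∈ W → ψ ⟨x, hx⟩ = 0) → ψ ⟨v, hv⟩ = 0) :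
    v ∈ W := by
  suffices (⟨v, hv⟩ : M) ∈ W.comap M.subtype from this
  rw [← Subspace.forall_mem_dualAnnihilator_apply_eq_zero_iff]
  exact fun ψ hψ ↦ h ψ fun x hx hxW ↦ (Submodule.mem_dualAnnihilator ψ).mp hψ ⟨x, hx⟩ hxW

theorem Ideal.iInf_pow_succ_sup_eq {R : Type*} [CommRing R] (J I : Ideal R)
    [IsHausdorff J (R ⧸ I)] : ⨅ n : ℕ, (J ^ (n + 1) ⊔ I) = I := by
  refine le_antisymm (fun x hx ↦ ?_) (le_iInf fun _ ↦ le_sup_right)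
  rw [← Ideal.Quotient.eq_zero_iff_mem]
  refine IsHausdorff.haus ‹_› _ fun n ↦ ?_
  have hxn : x ∈ J ^ n ⊔ I :=
    sup_le_sup_right (Ideal.pow_le_pow_right n.le_succ) I (Ideal.mem_iInf.mp hx n)
  rw [SModEq.zero, Ideal.smul_top_eq_map]
  exact Ideal.mem_quotient_iff_mem_sup.mpr hxn

/-- `O` a noetherian local ring with residue field `k` (here: a `k`-algebra
such that `k → O/m` is bijective), `I ⊆ O` an ideal, `f ∈ m`.  If for every `n` every
`k`-linear functional `ψ : m/m^{n+1} → k` vanishing on the image of `I` also vanishes on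
the image of `f`, then `f ∈ ⋂_n (m^{n+1} + I)`; hence if `I` is primary then `f ∈ I`. -/
theorem stmt_12 (k O : Type*) [Field k] [CommRing O] [Algebra k O]
    [IsNoetherianRing O] [IsLocalRing O]
    (I : Ideal O) (f : O) (hf : f ∈ IsLocalRing.maximalIdeal O)
    (h : ∀ n : ℕ,
      ∀ ψ : ↥(Submodule.restrictScalars k
          ((IsLocalRing.maximalIdeal O).map
            (Ideal.Quotient.mk (IsLocalRing.maximalIdeal O ^ (n + 1))))) →ₗ[k] k,
        (∀ (x : O ⧸ IsLocalRing.maximalIdeal O ^ (n + 1))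
            (hx : x ∈ (IsLocalRing.maximalIdeal O).map
              (Ideal.Quotient.mk (IsLocalRing.maximalIdeal O ^ (n + 1)))),
          x ∈ I.map (Ideal.Quotient.mk (IsLocalRing.maximalIdeal O ^ (n + 1))) →
            ψ ⟨x, hx⟩ = 0) →
        ψ ⟨Ideal.Quotient.mk (IsLocalRing.maximalIdeal O ^ (n + 1)) f,
            by exact Ideal.mem_map_of_mem _ hf⟩ = 0) :
    (f ∈ ⨅ n : ℕ, (IsLocalRing.maximalIdeal O ^ (n + 1) ⊔ I)) ∧
      (I.IsPrimary → f ∈ I) := by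
  have hclosure : f ∈ ⨅ n : ℕ, (IsLocalRing.maximalIdeal O ^ (n + 1) ⊔ I) := by
    refine Ideal.mem_iInf.mpr fun n ↦ ?_
    have hfI : Ideal.Quotient.mk _ f ∈ (I.map _).restrictScalars k :=
      Subspace.mem_of_forall_dual_eq_zero_of_eq_zero_on_inf _ (h n)
    rw [sup_comm]
    exact Ideal.mem_quotient_iff_mem_sup.mp hfI
  exact ⟨hclosure, fun _ ↦ (IsLocalRing.maximalIdeal O).iInf_pow_succ_sup_eq I ▸ hclosure⟩
end

section
/- Let k be a ring, R a finite free k-algebra of rank t with basis e_1,…,e_t, and let Y = Spec(R[y]/I) for an ideal I of the polynomial ring R[y] in variables y. Define ρ : R[y] → k[y_1,…,y_t] ⊗_k R by ρ(y) = Σ_j y_j ⊗ e_j and ρ(r) = 1 ⊗ r, and let I' ⊆ k[y_1,…,y_t] be the ideal generated by the components P_1,…,P_t (with respect to the basis e_1,…,e_t) of ρ(P) as P ranges over I. Then for every k-algebra A, R-algebra homomorphisms R[y]/I → A ⊗_k R correspond bijectively to k-algebra homomorphisms k[y_1,…,y_t]/I' → A, via f ↦ (f ⊗ id_R) ∘ ρ̄,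 where ρ̄ is the map induced by ρ on quotients. -/
/-!
Write `πⱼ : R ⊗[k] A → A` for the `j`-th coordinate with respect to the basis `e`, so that
`x = Σⱼ eⱼ ⊗ πⱼ x` and `x = 0` iff all `πⱼ x` vanish. An `R`-algebra map `g : R[y] → R ⊗[k] A` is
determined by the images `g(y_s)`, i.e. by the coordinates `πⱼ (g y_s) ∈ A`, which are the values of
an arbitrary `k`-algebra map `k[ȳ] → A` at `y_{s,j}`; this is the bijection `f ↦ (id ⊗ f) ∘ ρ`.
Since `πⱼ` commutes with `id ⊗ f`, the map `(id ⊗ f) ∘ ρ` kills `P` iff `f` kills every `πⱼ (ρ P)`,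
so the bijection matches the maps killing `I'` with those killing `I`.
-/

open TensorProduct MvPolynomial

noncomputable section

namespace WeilRestriction

variable {k R A B : Type*} [CommRing k] [CommRing R] [Algebra k R]
  [CommRing A] [Algebra k A] [CommRing B] [Algebra k B] {t : ℕ}

def coord (b : Module.Basis (Fin t) k R) (j : Fin t) : R ⊗[k] A →ₗ[k] A :=
  TensorProduct.lift ((LinearMap.lsmul k A).comp (b.coord j))

@[simp]
lemma coord_tmul (b : Module.Basis (Fin t) k R) (j : Fin t) (r : R) (a : A) :
    coord b j (r ⊗ₜ[k] a) = b.coord j r • a :=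
  rfl

lemma sum_tmul_coord (b : Module.Basis (Fin t) k R) (x : R ⊗[k] A) :
    ∑ j, b j ⊗ₜ[k] coord b j x = x := by
  induction x using TensorProduct.induction_on with
  | zero => simp
  | tmul r a =>
    simp_rw [coord_tmul, ← smul_tmul, ← sum_tmul]
    simp [b.sum_repr r]
  | add x y hx hy => simp only [map_add, tmul_add, Finset.sum_add_distrib, hx, hy]

lemma eq_zero_iff_forall_coord_eq_zero (b : Module.Basis (Fin t) k R) (x : R ⊗[k] A) :
    x = 0 ↔ ∀ j, coord b j x = 0 := by
  refine ⟨fun hx j => by simp [hx], fun h => ?_⟩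
  rw [← sum_tmul_coord b x]
  simp [h]

lemma coord_map (b : Module.Basis (Fin t) k R) (f : B →ₐ[k] A) (j : Fin t) (x : R ⊗[k] B) :
    coord b j (Algebra.TensorProduct.map (AlgHom.id R R) f x) = f (coord b j x) := by
  induction x using TensorProduct.induction_on with
  | zero => simp
  | tmul r q => simp [map_smul]
  | add x y hx hy => simp [hx, hy]

lemma coord_tmul_basis (b : Module.Basis (Fin t) k R) (i j : Fin t) (a : A) :
    coord b j (b i ⊗ₜ[k] a) = if i = j then a else 0 := by
  simp [Module.Basis.coord_apply, Finsupp.single_apply]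

lemma span_coord_le_ker_iff {S : Type*} [CommRing S] [Algebra R S] (b : Module.Basis (Fin t) k R)
    (I : Ideal S) (ρ : S →ₐ[R] R ⊗[k] B) (f : B →ₐ[k] A) :
    Ideal.span {q | ∃ P ∈ I, ∃ j, q = coord b j (ρ P)} ≤ RingHom.ker f ↔
      I ≤ RingHom.ker ((Algebra.TensorProduct.map (AlgHom.id R R) f).comp ρ) := by
  rw [Ideal.span_le]
  simp only [Set.subset_def, SetLike.le_def, SetLike.mem_coe, RingHom.mem_ker,
    AlgHom.comp_apply, eq_zero_iff_forall_coord_eq_zero b, coord_map]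
  exact ⟨fun h P hP j => h _ ⟨P, hP, j, rfl⟩, by rintro h _ ⟨P, hP, j, rfl⟩; exact h hP j⟩

variable (σ : Type*)

abbrev universalHom (b : Module.Basis (Fin t) k R) :
    MvPolynomial σ R →ₐ[R] R ⊗[k] MvPolynomial (σ × Fin t) k :=
  aeval fun s => ∑ j, b j ⊗ₜ[k] X (s, j)

lemma map_comp_universalHom_X (b : Module.Basis (Fin t) k R)
    (f : MvPolynomial (σ × Fin t) k →ₐ[k] A) (s : σ) :
    (Algebra.TensorProduct.map (AlgHom.id R R) f).comp (universalHom σ b) (X s) =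
      ∑ j, b j ⊗ₜ[k] f (X (s, j)) := by
  simp

def homEquiv (b : Module.Basis (Fin t) k R) :
    (MvPolynomial (σ × Fin t) k →ₐ[k] A) ≃ (MvPolynomial σ R →ₐ[R] R ⊗[k] A) where
  toFun f := (Algebra.TensorProduct.map (AlgHom.id R R) f).comp (universalHom σ b)
  invFun g := aeval fun p => coord b p.2 (g (X p.1))
  left_inv f := by
    ext ⟨s, j⟩
    simp only [map_comp_universalHom_X, map_sum, coord_tmul_basis, Finset.sum_ite_eq',
      Finset.mem_univ, if_true, aeval_X]
  right_inv g := by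
    ext s
    rw [map_comp_universalHom_X]
    simpa using sum_tmul_coord b (g (X s))

end WeilRestriction

end

open WeilRestriction in
/-- affine Weil restriction: `R` a finite free `k`-algebra with basis
`b : Fin t → R`, `I ⊆ R[y]` an ideal (`y` indexed by an arbitrary type `σ`),
`ρ : R[y] → k[ȳ] ⊗_k R` (written with the factors swapped, `R ⊗_k k[ȳ]`) the `R`-algebra
map `y_s ↦ Σ_j e_j ⊗ y_{s,j}`, and `I'` the ideal generated by the basis components
`π_j(ρ(P))` for `P ∈ I`.  Then for every `k`-algebra `A`, `R`-algebra homomorphisms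
`R[y]/I → A ⊗_k R` correspond bijectively to `k`-algebra homomorphisms `k[ȳ]/I' → A`
via `f ↦ (f ⊗ id_R) ∘ ρ` (expressed here on homomorphisms killing the ideals). -/
theorem stmt_16 (k R : Type*) [CommRing k] [CommRing R] [Algebra k R]
    (t : ℕ) (b : Module.Basis (Fin t) k R)
    (σ : Type*) (I : Ideal (MvPolynomial σ R))
    (ρ : MvPolynomial σ R →ₐ[R] R ⊗[k] MvPolynomial (σ × Fin t) k)
    (hρ : ρ = aeval (fun s => ∑ j, (b j) ⊗ₜ[k] (X (s, j))))
    (I' : Ideal (MvPolynomial (σ × Fin t) k))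
    (hI' : I' = Ideal.span {q | ∃ P ∈ I, ∃ j : Fin t,
      q = TensorProduct.lift
            ((LinearMap.lsmul k (MvPolynomial (σ × Fin t) k)).comp (b.coord j)) (ρ P)})
    (A : Type*) [CommRing A] [Algebra k A] :
    Set.BijOn
      (fun f : MvPolynomial (σ × Fin t) k →ₐ[k] A =>
        (Algebra.TensorProduct.map (AlgHom.id R R) f).comp ρ)
      {f | I' ≤ RingHom.ker f}
      {g : MvPolynomial σ R →ₐ[R] R ⊗[k] A | I ≤ RingHom.ker g} := by
  subst hρ hI'
  exact (homEquiv σ b).bijOn fun f => (span_coord_le_ker_iff b I _ f).symm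
end
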